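/- arXiv:math/0509093 — 3 statements merged into one kernel-verified Lean document; each statement's English description precedes it below -/
import Mathlib

section
/- Let (X, 𝓑, m, T) be a dissipative measure-preserving transformation of a σ-finite measure space. Then for every f ∈ L¹(m) with f ≥ 0 one has Σ_{n≥0} f(Tⁿx) < ∞ for m-almost every x ∈ X. -/
open MeasureTheory Set Filter ENNReal

/-- A set `W` is wandering for `T` if `W ∩ T⁻ⁿW = ∅` for all `n ≥ 1`. -/
def Wandering {X : Type*} [MeasurableSpace X] (T : X → X) (W : Set X) : Prop :=
  ∀ n : ℕ, 1 ≤ n → W ∩ (T^[n]) ⁻¹' W = ∅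

/-- `T` is dissipative if `X` is, mod `m`, a countable union of wandering sets. -/
def Dissipative {X : Type*} [MeasurableSpace X] (m : Measure X) (T : X → X) : Prop :=
  ∃ W : ℕ → Set X, (∀ n, MeasurableSet (W n) ∧ Wandering T (W n)) ∧
    m (Set.univ \ ⋃ n, W n) = 0

/-!
The preimages `T⁻ʲW` of a wandering set are pairwise disjoint. Hence for every `N` the sets
`T⁻⁽ᴺ⁻ⁿ⁾W ∩ T⁻ᴺA`, `n < N`, are disjoint subsets of `T⁻ᴺA`, and measure preservation turns
this into `∑ₙ m (W ∩ T⁻ⁿA) ≤ m A`: the orbit push-forwards of `m|_W` add up to at most `m`.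
Integrating `f` against them gives `∫_W ∑ₙ f ∘ Tⁿ dm ≤ ∫ f dm < ∞`, so the orbit sums are finite
almost everywhere on each wandering set, hence almost everywhere when `T` is dissipative.
-/

section

open Function

variable {X : Type*} [MeasurableSpace X] {m : Measure X} {T : X → X} {W : Set X}

namespace Wandering

theorem pairwise_disjoint_preimage_iterate (hW : Wandering T W) :
    Pairwise (Disjoint on (T^[·] ⁻¹' W)) := by
  have key : ∀ i k, 1 ≤ k → Disjoint (T^[i] ⁻¹' W) (T^[k + i] ⁻¹' W) := by
    intro i k hk
    rw [iterate_add, preimage_comp, Set.disjoint_iff_inter_eq_empty, ← preimage_inter,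
      hW k hk, preimage_empty]
  intro i j hij
  rcases lt_or_gt_of_ne hij with h | h
  · simpa [Nat.sub_add_cancel h.le] using key i (j - i) (by omega)
  · simpa [Nat.sub_add_cancel h.le] using (key j (i - j) (by omega)).symm

theorem sum_map_iterate_restrict_le (hT : MeasurePreserving T m m) (hWm : MeasurableSet W)
    (hW : Wandering T W) : Measure.sum (fun n => (m.restrict W).map T^[n]) ≤ m := by
  refine Measure.le_iff.2 fun A hA => ?_
  simp only [Measure.sum_apply _ hA, Measure.map_apply (hT.measurable.iterate _) hA,
    Measure.restrict_apply (hT.measurable.iterate _ hA)]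
  refine ENNReal.tsum_le_of_sum_range_le fun N => ?_
  have hshift : ∀ n ∈ Finset.range N,
      m (T^[n] ⁻¹' A ∩ W) = m (T^[N - n] ⁻¹' W ∩ T^[N] ⁻¹' A) := by
    intro n hn
    have hN : N = n + (N - n) := by have := Finset.mem_range.1 hn; omega
    have hmeas : MeasurableSet (T^[n] ⁻¹' A ∩ W) := (hT.measurable.iterate n hA).inter hWm
    rw [← (hT.iterate (N - n)).measure_preimage hmeas.nullMeasurableSet, preimage_inter,
      inter_comm, ← preimage_comp, ← iterate_add, ← hN]
  have hdisj : (Finset.range N : Set ℕ).PairwiseDisjoint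
      fun n => T^[N - n] ⁻¹' W ∩ T^[N] ⁻¹' A := by
    intro i hi j hj hij
    refine (hW.pairwise_disjoint_preimage_iterate ?_).mono inter_subset_left inter_subset_left
    simp only [Finset.coe_range, mem_Iio] at hi hj
    omega
  calc ∑ n ∈ Finset.range N, m (T^[n] ⁻¹' A ∩ W)
      = m (⋃ n ∈ Finset.range N, T^[N - n] ⁻¹' W ∩ T^[N] ⁻¹' A) := by
        rw [Finset.sum_congr rfl hshift, measure_biUnion_finset hdisj fun n _ =>
          ((hT.measurable.iterate _ hWm).inter (hT.measurable.iterate _ hA))]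
    _ ≤ m (T^[N] ⁻¹' A) := measure_mono (iUnion₂_subset fun _ _ => inter_subset_right)
    _ = m A := (hT.iterate N).measure_preimage hA.nullMeasurableSet

theorem lintegral_tsum_iterate_le (hT : MeasurePreserving T m m) (hWm : MeasurableSet W)
    (hW : Wandering T W) {g : X → ℝ≥0∞} (hg : AEMeasurable g m) :
    ∫⁻ x in W, ∑' n, g (T^[n] x) ∂m ≤ ∫⁻ x, g x ∂m := by
  have hmap : ∀ n, (m.restrict W).map T^[n] ≤ m := fun n =>
    (Measure.le_sum _ n).trans (hW.sum_map_iterate_restrict_le hT hWm)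
  calc ∫⁻ x in W, ∑' n, g (T^[n] x) ∂m
      = ∑' n, ∫⁻ x in W, g (T^[n] x) ∂m :=
        lintegral_tsum fun n =>
          (hg.comp_quasiMeasurePreserving (hT.iterate n).quasiMeasurePreserving).restrict
    _ = ∑' n, ∫⁻ x, g x ∂(m.restrict W).map T^[n] := by
        congr 1 with n
        rw [lintegral_map' (hg.mono_measure (hmap n))
          (hT.measurable.iterate n).aemeasurable]
    _ = ∫⁻ x, g x ∂Measure.sum (fun n => (m.restrict W).map T^[n]) :=
        (lintegral_sum_measure _ _).symm
    _ ≤ ∫⁻ x, g x ∂m := lintegral_mono' (hW.sum_map_iterate_restrict_le hT hWm) le_rfl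

theorem ae_tsum_iterate_lt_top (hT : MeasurePreserving T m m) (hWm : MeasurableSet W)
    (hW : Wandering T W) {g : X → ℝ≥0∞} (hg : AEMeasurable g m) (hgi : ∫⁻ x, g x ∂m ≠ ∞) :
    ∀ᵐ x ∂m, x ∈ W → ∑' n, g (T^[n] x) < ∞ := by
  refine (ae_restrict_iff'₀ hWm.nullMeasurableSet).1 (ae_lt_top' ?_ ?_)
  · exact AEMeasurable.tsum fun n =>
      (hg.comp_quasiMeasurePreserving (hT.iterate n).quasiMeasurePreserving).restrict
  · exact ((hW.lintegral_tsum_iterate_le hT hWm hg).trans_lt hgi.lt_top).ne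

end Wandering

theorem Dissipative.ae_tsum_iterate_lt_top (hT : MeasurePreserving T m m)
    (hdiss : Dissipative m T) {g : X → ℝ≥0∞} (hg : AEMeasurable g m) (hgi : ∫⁻ x, g x ∂m ≠ ∞) :
    ∀ᵐ x ∂m, ∑' n, g (T^[n] x) < ∞ := by
  obtain ⟨W, hW, hcover⟩ := hdiss
  have hmem : ∀ᵐ x ∂m, x ∈ ⋃ k, W k := by
    rw [← compl_eq_univ_sdiff] at hcover
    exact measure_eq_zero_iff_ae_notMem.1 hcover |>.mono fun x hx => not_not.1 hx
  have hfin := ae_all_iff.2 fun k => (hW k).2.ae_tsum_iterate_lt_top hT (hW k).1 hg hgi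
  filter_upwards [hmem, hfin] with x hx hxfin
  obtain ⟨k, hk⟩ := mem_iUnion.1 hx
  exact hxfin k hk

end

theorem stmt5_general {X : Type*} [MeasurableSpace X]
    (m : Measure X)
    (T : X → X) (hT : Measurable T)
    (hTm : ∀ A : Set X, MeasurableSet A → m (T ⁻¹' A) = m A)
    (hdiss : Dissipative m T)
    (f : X → ℝ) (hf : Integrable f m) (hf0 : 0 ≤ f) :
    ∀ᵐ x ∂m, Summable fun n : ℕ => f (T^[n] x) := by
  have hTP : MeasurePreserving T m m :=
    ⟨hT, Measure.ext fun A hA => by rw [Measure.map_apply hT hA, hTm A hA]⟩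
  filter_upwards [hdiss.ae_tsum_iterate_lt_top hTP hf.1.aemeasurable.ennreal_ofReal
    ((hasFiniteIntegral_iff_ofReal (ae_of_all _ hf0)).1 hf.2).ne] with x hx
  simpa [ENNReal.toReal_ofReal (hf0 _)] using ENNReal.summable_toReal hx.ne

theorem stmt5 {X : Type*} [MeasurableSpace X]
    (m : Measure X) [SigmaFinite m]
    (T : X → X) (hT : Measurable T)
    (hTm : ∀ A : Set X, MeasurableSet A → m (T ⁻¹' A) = m A)
    (hdiss : Dissipative m T)
    (f : X → ℝ) (hf : Integrable f m) (hf0 : 0 ≤ f) :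
    ∀ᵐ x ∂m, Summable fun n : ℕ => f (T^[n] x) :=
  stmt5_general m T hT hTm hdiss f hf hf0
end

section
/- Let (X, 𝓑, m, T) be a dissipative measure-preserving transformation of a σ-finite measure space, let f ∈ L¹(m) with f ≥ 0, and define F := Σ_{n≥0} f∘Tⁿ + Σ_{n≥1} T̂ⁿf (which is finite m-a.e.). Then T̂F = F m-a.e.; equivalently, the measure with density F with respect to m is T-invariant. -/
open MeasureTheory Set Filter ENNReal

/-- The transfer operator `T̂` of `T` with respect to `m`: `T̂f` is the
Radon–Nikodym derivative with respect to `m` of the pushforward under `T`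
of the measure `f·dm`, so `∫_A T̂f dm = ∫_{T⁻¹A} f dm` for measurable `A`. -/
noncomputable def transferOp {X : Type*} [MeasurableSpace X] (m : Measure X) (T : X → X)
    (f : X → ℝ≥0∞) : X → ℝ≥0∞ :=
  ((m.withDensity f).map T).rnDeriv m

section Aux

variable {X : Type*} [MeasurableSpace X] (m : Measure X) [SigmaFinite m] (T : X → X)

lemma transferOp_measurable (g : X → ℝ≥0∞) : Measurable (transferOp m T g) :=
  Measure.measurable_rnDeriv _ _

lemma map_wd_ac (hT : Measurable T)
    (hTm : ∀ A : Set X, MeasurableSet A → m (T ⁻¹' A) = m A) (g : X → ℝ≥0∞) :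
    ((m.withDensity g).map T) ≪ m := by
  refine Measure.AbsolutelyContinuous.mk fun s hs h0 => ?_
  rw [Measure.map_apply hT hs]
  exact withDensity_absolutelyContinuous m g (by rw [hTm s hs]; exact h0)

lemma wd_transferOp (hT : Measurable T)
    (hTm : ∀ A : Set X, MeasurableSet A → m (T ⁻¹' A) = m A) (g : X → ℝ≥0∞) :
    m.withDensity (transferOp m T g) = (m.withDensity g).map T :=
  Measure.withDensity_rnDeriv_eq _ _ (map_wd_ac m T hT hTm g)

lemma setLIntegral_transferOp (hT : Measurable T)
    (hTm : ∀ A : Set X, MeasurableSet A → m (T ⁻¹' A) = m A) (g : X → ℝ≥0∞)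
    {A : Set X} (hA : MeasurableSet A) :
    ∫⁻ x in A, transferOp m T g x ∂m = ∫⁻ x in T ⁻¹' A, g x ∂m := by
  rw [← withDensity_apply _ hA, wd_transferOp m T hT hTm g,
    Measure.map_apply hT hA, withDensity_apply _ (hT hA)]

lemma setLIntegral_comp (hT : Measurable T)
    (hTm : ∀ A : Set X, MeasurableSet A → m (T ⁻¹' A) = m A)
    {h : X → ℝ≥0∞} (hh : Measurable h) {A : Set X} (hA : MeasurableSet A) :
    ∫⁻ x in T ⁻¹' A, h (T x) ∂m = ∫⁻ x in A, h x ∂m := by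
  have hmap : m.map T = m := Measure.ext fun s hs => by rw [Measure.map_apply hT hs, hTm s hs]
  conv_rhs => rw [← hmap]
  exact (setLIntegral_map hA hh hT).symm

end Aux

theorem stmt7 {X : Type*} [MeasurableSpace X]
    (m : Measure X) [SigmaFinite m]
    (T : X → X) (hT : Measurable T)
    (hTm : ∀ A : Set X, MeasurableSet A → m (T ⁻¹' A) = m A)
    (hdiss : Dissipative m T)
    (f : X → ℝ≥0∞) (hf : Measurable f) (hfL1 : ∫⁻ x, f x ∂m ≠ ∞)
    (F : X → ℝ≥0∞)
    (hF : F = fun x => (∑' n : ℕ, f (T^[n] x)) + ∑' n : ℕ, ((transferOp m T)^[n + 1] f) x) :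
    transferOp m T F =ᵐ[m] F ∧
      ∀ A : Set X, MeasurableSet A → m.withDensity F (T ⁻¹' A) = m.withDensity F A := by
  -- measurability facts
  have hfn : ∀ n : ℕ, Measurable fun x => f (T^[n] x) := fun n => hf.comp (hT.iterate n)
  have hgn : ∀ n : ℕ, Measurable ((transferOp m T)^[n + 1] f) := by
    intro n
    rw [Function.iterate_succ_apply']
    exact transferOp_measurable m T _
  have hFmeas : Measurable F := by
    rw [hF]
    exact (Measurable.ennreal_tsum hfn).add (Measurable.ennreal_tsum fun n => hgn n)
  -- the invariance of `m.withDensity F`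
  have key : ∀ A : Set X, MeasurableSet A →
      m.withDensity F (T ⁻¹' A) = m.withDensity F A := by
    intro A hA
    rw [withDensity_apply _ (hT hA), withDensity_apply _ hA, hF]
    have hL : ∫⁻ x in T ⁻¹' A,
        ((∑' n : ℕ, f (T^[n] x)) + ∑' n : ℕ, ((transferOp m T)^[n + 1] f) x) ∂m
        = (∑' n : ℕ, ∫⁻ x in T ⁻¹' A, f (T^[n] x) ∂m)
          + ∑' n : ℕ, ∫⁻ x in T ⁻¹' A, ((transferOp m T)^[n + 1] f) x ∂m := by
      rw [lintegral_add_left (Measurable.ennreal_tsum hfn),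
        lintegral_tsum fun n => (hfn n).aemeasurable,
        lintegral_tsum fun n => (hgn n).aemeasurable]
    have hR : ∫⁻ x in A,
        ((∑' n : ℕ, f (T^[n] x)) + ∑' n : ℕ, ((transferOp m T)^[n + 1] f) x) ∂m
        = (∑' n : ℕ, ∫⁻ x in A, f (T^[n] x) ∂m)
          + ∑' n : ℕ, ∫⁻ x in A, ((transferOp m T)^[n + 1] f) x ∂m := by
      rw [lintegral_add_left (Measurable.ennreal_tsum hfn),
        lintegral_tsum fun n => (hfn n).aemeasurable,
        lintegral_tsum fun n => (hgn n).aemeasurable]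
    rw [hL, hR]
    -- identities for the individual terms
    have hc0 : ∫⁻ x in T ⁻¹' A, f (T^[0] x) ∂m
        = ∫⁻ x in A, ((transferOp m T)^[0 + 1] f) x ∂m := by
      simp only [Function.iterate_zero, Function.iterate_one, id_eq]
      exact (setLIntegral_transferOp m T hT hTm f hA).symm
    have hcsucc : ∀ n : ℕ, ∫⁻ x in T ⁻¹' A, f (T^[n + 1] x) ∂m
        = ∫⁻ x in A, f (T^[n] x) ∂m := by
      intro n
      have : ∀ x, f (T^[n + 1] x) = f (T^[n] (T x)) := fun x => by
        rw [Function.iterate_succ_apply]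
      simp only [this]
      exact setLIntegral_comp m T hT hTm (hfn n) hA
    have hd : ∀ n : ℕ, ∫⁻ x in T ⁻¹' A, ((transferOp m T)^[n + 1] f) x ∂m
        = ∫⁻ x in A, ((transferOp m T)^[n + 1 + 1] f) x ∂m := by
      intro n
      have h2 : (transferOp m T)^[n + 1 + 1] f
          = transferOp m T ((transferOp m T)^[n + 1] f) := by
        rw [Function.iterate_succ_apply']
      rw [h2]
      exact (setLIntegral_transferOp m T hT hTm _ hA).symm
    calc (∑' n : ℕ, ∫⁻ x in T ⁻¹' A, f (T^[n] x) ∂m)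
          + ∑' n : ℕ, ∫⁻ x in T ⁻¹' A, ((transferOp m T)^[n + 1] f) x ∂m
        = ((∫⁻ x in A, ((transferOp m T)^[0 + 1] f) x ∂m)
            + ∑' n : ℕ, ∫⁻ x in A, f (T^[n] x) ∂m)
          + ∑' n : ℕ, ∫⁻ x in A, ((transferOp m T)^[n + 1 + 1] f) x ∂m := by
          rw [tsum_eq_zero_add' (f := fun n => ∫⁻ x in T ⁻¹' A, f (T^[n] x) ∂m)
            ENNReal.summable, hc0]
          congr 1
          · congr 1
            exact tsum_congr hcsucc
          · exact tsum_congr hd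
      _ = (∑' n : ℕ, ∫⁻ x in A, f (T^[n] x) ∂m)
          + ∑' n : ℕ, ∫⁻ x in A, ((transferOp m T)^[n + 1] f) x ∂m := by
          rw [tsum_eq_zero_add' (f := fun n => ∫⁻ x in A, ((transferOp m T)^[n + 1] f) x ∂m)
            ENNReal.summable]
          ring
  refine ⟨?_, key⟩
  have hmap : (m.withDensity F).map T = m.withDensity F :=
    Measure.ext fun s hs => by rw [Measure.map_apply hT hs]; exact key s hs
  have : transferOp m T F = (m.withDensity F).rnDeriv m := by
    rw [transferOp, hmap]
  rw [this]
  exact Measure.rnDeriv_withDensity m hFmeas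
end

section
/- Let (X, 𝓑, m, T) be a dissipative measure-preserving transformation of a σ-finite measure space. Suppose A, B ∈ 𝓑 are disjoint, A ∪ B is a wandering set for T, and m(A) < ∞. Define F := Σ_{n≥0} 1_A∘Tⁿ + Σ_{n≥1} T̂ⁿ(1_A). Then F = 0 m-a.e. on B. Consequently the measure with density F with respect to m is a T-invariant, m-absolutely continuous measure annihilating B. -/
open MeasureTheory Set Filter ENNReal

section aux
variable {X : Type*} [MeasurableSpace X] (m : Measure X) [SigmaFinite m]
  (T : X → X) (hT : Measurable T)
  (hTm : ∀ A : Set X, MeasurableSet A → m (T ⁻¹' A) = m A)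

include hT hTm in
lemma transferOp_key (g : X → ℝ≥0∞) {C : Set X} (hC : MeasurableSet C) :
    ∫⁻ x in C, transferOp m T g x ∂m = ∫⁻ x in T ⁻¹' C, g x ∂m := by
  set μ := (m.withDensity g).map T with hμ
  have hac : μ ≪ m := by
    refine Measure.AbsolutelyContinuous.mk fun s hs h0 => ?_
    rw [hμ, Measure.map_apply hT hs, withDensity_apply _ (hT hs),
      setLIntegral_measure_zero _ _ (by rw [hTm s hs, h0])]
  calc ∫⁻ x in C, transferOp m T g x ∂m
      = m.withDensity (μ.rnDeriv m) C := (withDensity_apply _ hC).symm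
    _ = μ C := by rw [Measure.withDensity_rnDeriv_eq μ m hac]
    _ = (m.withDensity g) (T ⁻¹' C) := Measure.map_apply hT hC
    _ = ∫⁻ x in T ⁻¹' C, g x ∂m := withDensity_apply _ (hT hC)

lemma transferOp_iter_measurable (g : X → ℝ≥0∞) (hg : Measurable g) (n : ℕ) :
    Measurable ((transferOp m T)^[n] g) := by
  cases n with
  | zero => exact hg
  | succ k =>
    rw [Function.iterate_succ_apply']
    exact Measure.measurable_rnDeriv _ _

include hT hTm in
lemma transferOp_key_iter (g : X → ℝ≥0∞) (n : ℕ) {C : Set X} (hC : MeasurableSet C) :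
    ∫⁻ x in C, (transferOp m T)^[n] g x ∂m = ∫⁻ x in T^[n] ⁻¹' C, g x ∂m := by
  induction n generalizing C with
  | zero => rfl
  | succ k ih =>
    rw [Function.iterate_succ_apply', transferOp_key m T hT hTm _ hC,
      ih (hT hC), Function.iterate_succ', Set.preimage_comp]

end aux

theorem stmt8 {X : Type*} [MeasurableSpace X]
    (m : Measure X) [SigmaFinite m]
    (T : X → X) (hT : Measurable T)
    (hTm : ∀ A : Set X, MeasurableSet A → m (T ⁻¹' A) = m A)
    (hdiss : Dissipative m T)
    (A B : Set X) (hA : MeasurableSet A) (hB : MeasurableSet B)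
    (hAB : Disjoint A B) (hwand : Wandering T (A ∪ B)) (hAfin : m A ≠ ∞)
    (F : X → ℝ≥0∞)
    (hF : F = fun x => (∑' n : ℕ, A.indicator (1 : X → ℝ≥0∞) (T^[n] x)) +
      ∑' n : ℕ, ((transferOp m T)^[n + 1] (A.indicator (1 : X → ℝ≥0∞))) x) :
    (∀ᵐ x ∂m, x ∈ B → F x = 0) ∧
    (∀ C : Set X, MeasurableSet C → m.withDensity F (T ⁻¹' C) = m.withDensity F C) ∧
    m.withDensity F ≪ m ∧
    m.withDensity F B = 0 := by
  set f : X → ℝ≥0∞ := A.indicator 1 with hf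
  have hfm : Measurable f := measurable_one.indicator hA
  have hfTn : ∀ n : ℕ, Measurable fun x => f (T^[n] x) :=
    fun n => hfm.comp (hT.iterate n)
  have hTnm : ∀ n : ℕ, Measurable ((transferOp m T)^[n] f) :=
    transferOp_iter_measurable m T f hfm
  set G : X → ℝ≥0∞ := fun x => ∑' n : ℕ, f (T^[n] x) with hG
  set H : X → ℝ≥0∞ := fun x => ∑' n : ℕ, ((transferOp m T)^[n + 1] f) x with hH
  have hGm : Measurable G := Measurable.ennreal_tsum hfTn
  have hHm : Measurable H := Measurable.ennreal_tsum fun n => hTnm (n + 1)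
  have hFGH : F = fun x => G x + H x := hF
  have hFm : Measurable F := by rw [hFGH]; exact hGm.add hHm
  -- orbit of a point of B never lies in A
  have hGB : ∀ x ∈ B, G x = 0 := by
    intro x hx
    rw [hG]
    simp only [ENNReal.tsum_eq_zero]
    intro n
    rcases Nat.eq_zero_or_pos n with h0 | hpos
    · subst h0
      simp only [Function.iterate_zero, id]
      exact Set.indicator_of_notMem (fun hxA => hAB.ne_of_mem hxA hx rfl) _
    · apply Set.indicator_of_notMem
      intro hxA
      have : x ∈ (A ∪ B) ∩ (T^[n]) ⁻¹' (A ∪ B) :=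
        ⟨Or.inr hx, Or.inl hxA⟩
      rw [hwand n hpos] at this
      exact this
  -- the transfer part vanishes a.e. on B
  have hHB : ∀ᵐ x ∂m, x ∈ B → H x = 0 := by
    have hint : ∫⁻ x in B, H x ∂m = 0 := by
      rw [hH, lintegral_tsum fun n => (hTnm (n + 1)).aemeasurable]
      simp only [ENNReal.tsum_eq_zero]
      intro n
      rw [transferOp_key_iter m T hT hTm f (n + 1) hB]
      have hdisj : A ∩ (T^[n+1]) ⁻¹' B = ∅ := by
        have := hwand (n + 1) (Nat.succ_le_succ (Nat.zero_le n))
        apply Set.eq_empty_of_subset_empty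
        rw [← this]
        exact Set.inter_subset_inter (Set.subset_union_left)
          (Set.preimage_mono Set.subset_union_right)
      rw [hf, lintegral_indicator_one hA,
        Measure.restrict_apply' ((hT.iterate (n+1)) hB), hdisj, measure_empty]
    have := (lintegral_eq_zero_iff hHm).mp hint
    exact (ae_restrict_iff' hB).mp this
  have haeB : ∀ᵐ x ∂m, x ∈ B → F x = 0 := by
    filter_upwards [hHB] with x hx hxB
    rw [hFGH]
    simp [hGB x hxB, hx hxB]
  refine ⟨haeB, ?_, withDensity_absolutelyContinuous m F, ?_⟩
  · -- invariance
    intro C hC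
    have hTC : MeasurableSet (T ⁻¹' C) := hT hC
    rw [withDensity_apply _ hTC, withDensity_apply _ hC]
    have expand : ∀ D : Set X, MeasurableSet D → ∫⁻ x in D, F x ∂m =
        (∑' n : ℕ, ∫⁻ x in D, f (T^[n] x) ∂m) +
        ∑' n : ℕ, ∫⁻ x in D, ((transferOp m T)^[n + 1] f) x ∂m := by
      intro D hD
      rw [hFGH]
      rw [lintegral_add_left hGm, hG, hH,
        lintegral_tsum fun n => (hfTn n).aemeasurable,
        lintegral_tsum fun n => (hTnm (n + 1)).aemeasurable]
    rw [expand _ hTC, expand _ hC]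
    -- shift identities
    have hmap : m.map T = m := by
      ext s hs
      rw [Measure.map_apply hT hs, hTm s hs]
    have hshift1 : ∀ n : ℕ, ∫⁻ x in C, f (T^[n] x) ∂m =
        ∫⁻ x in T ⁻¹' C, f (T^[n+1] x) ∂m := by
      intro n
      conv_lhs => rw [← hmap]
      rw [setLIntegral_map hC (hfTn n) hT]
      simp only [← Function.iterate_succ_apply]
    have hshift2 : ∀ n : ℕ, ∫⁻ x in C, ((transferOp m T)^[n+1] f) x ∂m =
        ∫⁻ x in T ⁻¹' C, ((transferOp m T)^[n] f) x ∂m := by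
      intro n
      rw [transferOp_key_iter m T hT hTm f (n+1) hC,
        transferOp_key_iter m T hT hTm f n hTC,
        ← Set.preimage_comp, ← Function.iterate_succ']
    have ra : (∑' n : ℕ, ∫⁻ x in C, f (T^[n] x) ∂m)
        = ∑' n : ℕ, ∫⁻ x in T ⁻¹' C, f (T^[n+1] x) ∂m := tsum_congr hshift1
    have rb : (∑' n : ℕ, ∫⁻ x in C, ((transferOp m T)^[n+1] f) x ∂m)
        = ∑' n : ℕ, ∫⁻ x in T ⁻¹' C, ((transferOp m T)^[n] f) x ∂m := tsum_congr hshift2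
    rw [ra, rb,
      tsum_eq_zero_add' (f := fun n : ℕ => ∫⁻ x in T ⁻¹' C, f (T^[n] x) ∂m)
        ENNReal.summable,
      tsum_eq_zero_add' (f := fun n : ℕ => ∫⁻ x in T ⁻¹' C, ((transferOp m T)^[n] f) x ∂m)
        ENNReal.summable]
    simp only [Function.iterate_zero_apply]
    ring
  · -- measure of B is zero
    rw [withDensity_apply _ hB]
    have : ∀ᵐ x ∂(m.restrict B), F x = 0 := (ae_restrict_iff' hB).mpr haeB
    rw [lintegral_congr_ae this, lintegral_zero]
end
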